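/- For every real x > 0, ψ(x+1) - ln(x + 1/2) lies strictly between P(x) and P(x) + 143/(30720x⁸), where P(x) = 1/(24x²) - 1/(24x³) + 23/(960x⁴) - 1/(160x⁵) - 11/(8064x⁶) - 1/(896x⁷). -/

import Mathlib

/-
Write `R y = ψ(y + 1) - log (y + 1/2) - P y`, `E y = 143 / (30720 y⁸)` and `t = 1 / (2y + 2)`.
The recurrence `ψ(y + 2) = ψ(y + 1) + 1 / (y + 1)` gives
`R y - R (y + 1) = log (1 + t) - log (1 - t) - (1 / (y + 1) + P y - P (y + 1))`.
Bounding `log (1 + t) - log (1 - t) = ∑ 2 t^(2k+1) / (2k+1)` below by its first five terms and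
above by adding a geometric majorant of the tail turns `0 < R y - R (y + 1) < E y - E (y + 1)` into
inequalities between rational functions of `y` whose differences have positive coefficients.
Since `R` and `E` tend to `0` (convexity of `log Γ` squeezes `ψ(y + 1)` between `log y` and
`log (y + 1)`), the strictly decreasing sequences `R (x + n)` and `(E - R) (x + n)` are positive.
-/

noncomputable def digamma (x : ℝ) : ℝ := deriv (fun y => Real.log (Real.Gamma y)) x

noncomputable def P (x : ℝ) : ℝ :=
  1 / (24 * x ^ 2) - 1 / (24 * x ^ 3) + 23 / (960 * x ^ 4) - 1 / (160 * x ^ 5)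
    - 11 / (8064 * x ^ 6) - 1 / (896 * x ^ 7)

open Real Set Filter Topology Finset

section Digamma

lemma differentiableAt_log_Gamma {x : ℝ} (hx : 0 < x) :
    DifferentiableAt ℝ (log ∘ Gamma) x :=
  (differentiableAt_Gamma fun m => by linarith [(Nat.cast_nonneg m : (0 : ℝ) ≤ m)]).log
    (Gamma_pos_of_pos hx).ne'

lemma log_Gamma_add_one {x : ℝ} (hx : 0 < x) :
    (log ∘ Gamma) (x + 1) = (log ∘ Gamma) x + log x := by
  simp only [Function.comp_apply, Gamma_add_one hx.ne',
    log_mul hx.ne' (Gamma_pos_of_pos hx).ne', add_comm]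

lemma digamma_add_one {x : ℝ} (hx : 0 < x) : digamma (x + 1) = digamma x + 1 / x := by
  change deriv (log ∘ Gamma) (x + 1) = deriv (log ∘ Gamma) x + 1 / x
  rw [← deriv_comp_add_const, one_div, ← deriv_log,
    ← deriv_add (differentiableAt_log_Gamma hx) (differentiableAt_log hx.ne')]
  apply EventuallyEq.deriv_eq
  filter_upwards [eventually_gt_nhds hx] using fun y hy => log_Gamma_add_one hy

lemma log_le_digamma_add_one {x : ℝ} (hx : 0 < x) : log x ≤ digamma (x + 1) := by
  refine (le_of_eq ?_).trans <| convexOn_log_Gamma.slope_le_deriv (mem_Ioi.mpr hx)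
    (mem_Ioi.mpr (by linarith : (0 : ℝ) < x + 1)) (by linarith)
    (differentiableAt_log_Gamma (by linarith))
  rw [slope_def_field, log_Gamma_add_one hx, add_sub_cancel_left, add_sub_cancel_left, div_one]

lemma digamma_add_one_le_log {x : ℝ} (hx : 0 < x) : digamma (x + 1) ≤ log (x + 1) := by
  have hx1 : 0 < x + 1 := by linarith
  refine (convexOn_log_Gamma.deriv_le_slope (mem_Ioi.mpr hx1)
    (mem_Ioi.mpr (by linarith : (0 : ℝ) < x + 1 + 1)) (by linarith)
    (differentiableAt_log_Gamma hx1)).trans (le_of_eq ?_)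
  rw [slope_def_field, log_Gamma_add_one hx1, add_sub_cancel_left, add_sub_cancel_left, div_one]

lemma tendsto_digamma_add_one_sub_log_add_half :
    Tendsto (fun x => digamma (x + 1) - log (x + 1 / 2)) atTop (𝓝 0) := by
  have hlow : Tendsto (fun x => log x - log (x + 1 / 2)) atTop (𝓝 0) := by
    simpa using (tendsto_log_comp_add_sub_log (1 / 2)).neg
  have hup : Tendsto (fun x => log (x + 1) - log (x + 1 / 2)) atTop (𝓝 0) := by
    refine ((tendsto_log_comp_add_sub_log (1 / 2)).comp
      (tendsto_atTop_add_const_right _ (1 / 2) tendsto_id)).congr fun x => ?_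
    norm_num [add_assoc]
  refine tendsto_of_tendsto_of_tendsto_of_le_of_le' hlow hup ?_ ?_ <;>
    filter_upwards [eventually_gt_atTop 0] with x hx
  · exact sub_le_sub_right (log_le_digamma_add_one hx) _
  · exact sub_le_sub_right (digamma_add_one_le_log hx) _

end Digamma

section LogSeries

variable {t : ℝ}

lemma sum_le_log_one_add_sub_log_one_sub (h0 : 0 ≤ t) (h1 : t < 1) (n : ℕ) :
    ∑ k ∈ range n, 2 * (1 / (2 * k + 1)) * t ^ (2 * k + 1) ≤ log (1 + t) - log (1 - t) :=
  sum_le_hasSum _ (fun k _ => by positivity)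
    (hasSum_log_sub_log_of_abs_lt_one (by rwa [abs_of_nonneg h0]))

lemma log_one_add_sub_log_one_sub_le (h0 : 0 ≤ t) (h1 : t < 1) (n : ℕ) :
    log (1 + t) - log (1 - t) ≤ ∑ k ∈ range n, 2 * (1 / (2 * k + 1)) * t ^ (2 * k + 1)
      + 2 * (1 / (2 * n + 1)) * t ^ (2 * n + 1) / (1 - t ^ 2) := by
  have hs := hasSum_log_sub_log_of_abs_lt_one (by rwa [abs_of_nonneg h0] : |t| < 1)
  have htail := (hasSum_nat_add_iff' n).mpr hs
  have hgeom := (hasSum_geometric_of_lt_one (sq_nonneg t) (by nlinarith)).mul_left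
    (2 * (1 / (2 * n + 1)) * t ^ (2 * n + 1))
  rw [← div_eq_mul_inv] at hgeom
  have := hasSum_le (fun k => ?_) htail hgeom
  · linarith
  · push_cast
    rw [← pow_mul, mul_assoc _ (t ^ _), ← pow_add,
      show 2 * n + 1 + 2 * k = 2 * (k + n) + 1 by ring]
    gcongr
    linarith

end LogSeries

lemma pos_of_tendsto_zero_of_add_one_lt {f : ℝ → ℝ} (hf : ∀ y, 0 < y → f (y + 1) < f y)
    (hlim : Tendsto f atTop (𝓝 0)) {x : ℝ} (hx : 0 < x) : 0 < f x := by
  have hanti : StrictAnti fun n : ℕ => f (x + n) :=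
    strictAnti_nat_of_succ_lt fun n => by
      simpa [add_assoc] using hf (x + n) (by positivity)
  have hlim' : Tendsto (fun n : ℕ => f (x + n)) atTop (𝓝 0) :=
    hlim.comp (tendsto_atTop_add_const_left _ x tendsto_natCast_atTop_atTop)
  simpa using (hanti.antitone.le_of_tendsto hlim' 1).trans_lt (hanti zero_lt_one)

noncomputable def digammaRemainder (y : ℝ) : ℝ := digamma (y + 1) - log (y + 1 / 2) - P y

noncomputable def errorBound (y : ℝ) : ℝ := 143 / (30720 * y ^ 8)

lemma tendsto_P_atTop : Tendsto P atTop (𝓝 0) := by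
  have hpoly : Tendsto (fun z : ℝ => z ^ 2 / 24 - z ^ 3 / 24 + 23 * z ^ 4 / 960 - z ^ 5 / 160
      - 11 * z ^ 6 / 8064 - z ^ 7 / 896) (𝓝 0) (𝓝 0) := by
    simpa using ((by fun_prop : Continuous fun z : ℝ => z ^ 2 / 24 - z ^ 3 / 24
      + 23 * z ^ 4 / 960 - z ^ 5 / 160 - 11 * z ^ 6 / 8064 - z ^ 7 / 896).tendsto 0)
  refine (hpoly.comp tendsto_inv_atTop_zero).congr fun y => ?_
  simp only [Function.comp_apply, P, div_eq_mul_inv, mul_inv, inv_pow]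
  ring

lemma tendsto_digammaRemainder_atTop : Tendsto digammaRemainder atTop (𝓝 0) :=
  sub_zero (0 : ℝ) ▸ tendsto_digamma_add_one_sub_log_add_half.sub tendsto_P_atTop

lemma tendsto_errorBound_atTop : Tendsto errorBound atTop (𝓝 0) :=
  tendsto_const_nhds.div_atTop <|
    (tendsto_pow_atTop (by norm_num)).const_mul_atTop (by norm_num)

section Recurrence

variable {y : ℝ}

lemma P_sub_P_add_one_lt_sum (hy : 0 < y) :
    1 / (y + 1) + P y - P (y + 1) <
      ∑ k ∈ range 5, 2 * (1 / (2 * k + 1)) * (1 / (2 * (y + 1))) ^ (2 * k + 1) := by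
  have key : ∑ k ∈ range 5, 2 * (1 / (2 * k + 1)) * (1 / (2 * (y + 1))) ^ (2 * k + 1)
      - (1 / (y + 1) + P y - P (y + 1))
      = (1 / 896 + 23 / 2016 * y + 263 / 4480 * y ^ 2 + 1177 / 6720 * y ^ 3 + 49 / 160 * y ^ 4
          + 37 / 120 * y ^ 5 + 53 / 320 * y ^ 6 + 143 / 3840 * y ^ 7) / (y ^ 7 * (y + 1) ^ 9) := by
    have : y + 1 ≠ 0 := by positivity
    simp only [sum_range_succ, sum_range_zero, P]
    norm_num
    field_simp
    ring
  rw [← sub_pos, key]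
  positivity

lemma sum_add_tail_sub_lt_errorBound_sub (hy : 0 < y) :
    ∑ k ∈ range 5, 2 * (1 / (2 * k + 1)) * (1 / (2 * (y + 1))) ^ (2 * k + 1)
      + 2 * (1 / (2 * (5 : ℕ) + 1)) * (1 / (2 * (y + 1))) ^ (2 * 5 + 1)
        / (1 - (1 / (2 * (y + 1))) ^ 2)
      - (1 / (y + 1) + P y - P (y + 1)) < errorBound y - errorBound (y + 1) := by
  have hq : 1 - (1 / (2 * (y + 1))) ^ 2 = (2 * y + 1) * (2 * y + 3) / (2 * (y + 1)) ^ 2 := by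
    field_simp
    ring
  have key : errorBound y - errorBound (y + 1) -
      (∑ k ∈ range 5, 2 * (1 / (2 * k + 1)) * (1 / (2 * (y + 1))) ^ (2 * k + 1)
      + 2 * (1 / (2 * (5 : ℕ) + 1)) * (1 / (2 * (y + 1))) ^ (2 * 5 + 1)
        / (1 - (1 / (2 * (y + 1))) ^ 2)
      - (1 / (y + 1) + P y - P (y + 1)))
      = (143 / 10240 + 40321 / 215040 * y + 82179 / 71680 * y ^ 2 + 2706721 / 645120 * y ^ 3
          + 3273803 / 322560 * y ^ 4 + 1090577 / 64512 * y ^ 5 + 1262831 / 64512 * y ^ 6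
          + 1668811 / 107520 * y ^ 7 + 4765507 / 591360 * y ^ 8 + 42041 / 16896 * y ^ 9
          + 3055 / 8448 * y ^ 10 + 1 / 128 * y ^ 11)
        / (y ^ 8 * (y + 1) ^ 11 * (2 * y + 1) * (2 * y + 3)) := by
    have : y + 1 ≠ 0 := by positivity
    rw [hq]
    simp only [sum_range_succ, sum_range_zero, P, errorBound]
    norm_num
    field_simp
    ring
  rw [← sub_pos, key]
  positivity

lemma log_add_three_halves_sub_log_add_half (hy : 0 < y) :
    log (y + 3 / 2) - log (y + 1 / 2)
      = log (1 + 1 / (2 * (y + 1))) - log (1 - 1 / (2 * (y + 1))) := by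
  have hy1 : 0 < y + 1 := by linarith
  have hplus : 1 + 1 / (2 * (y + 1)) = (y + 3 / 2) / (y + 1) := by
    field_simp
    ring
  have hminus : 1 - 1 / (2 * (y + 1)) = (y + 1 / 2) / (y + 1) := by
    field_simp
    ring
  rw [hplus, hminus, log_div (by linarith) hy1.ne', log_div (by linarith) hy1.ne']
  ring

lemma digammaRemainder_sub_add_one (hy : 0 < y) :
    digammaRemainder y - digammaRemainder (y + 1)
      = log (1 + 1 / (2 * (y + 1))) - log (1 - 1 / (2 * (y + 1)))
        - (1 / (y + 1) + P y - P (y + 1)) := by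
  rw [← log_add_three_halves_sub_log_add_half hy, digammaRemainder, digammaRemainder,
    digamma_add_one (by linarith : 0 < y + 1)]
  ring_nf

lemma one_div_two_mul_add_one_lt_one (hy : 0 < y) : 1 / (2 * (y + 1)) < 1 := by
  rw [div_lt_one (by positivity)]
  linarith

lemma digammaRemainder_add_one_lt (hy : 0 < y) :
    digammaRemainder (y + 1) < digammaRemainder y := by
  have hseries := sum_le_log_one_add_sub_log_one_sub (by positivity)
    (one_div_two_mul_add_one_lt_one hy) 5
  linarith [digammaRemainder_sub_add_one hy, P_sub_P_add_one_lt_sum hy]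

lemma errorBound_sub_digammaRemainder_add_one_lt (hy : 0 < y) :
    errorBound (y + 1) - digammaRemainder (y + 1) < errorBound y - digammaRemainder y := by
  have hseries := log_one_add_sub_log_one_sub_le (by positivity)
    (one_div_two_mul_add_one_lt_one hy) 5
  linarith [digammaRemainder_sub_add_one hy, sum_add_tail_sub_lt_errorBound_sub hy]

end Recurrence

theorem stmt13 (x : ℝ) (hx : 0 < x) :
    P x < digamma (x + 1) - Real.log (x + 1 / 2) ∧
    digamma (x + 1) - Real.log (x + 1 / 2) < P x + 143 / (30720 * x ^ 8) := by
  have hlower : 0 < digammaRemainder x :=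
    pos_of_tendsto_zero_of_add_one_lt (fun _ => digammaRemainder_add_one_lt)
      tendsto_digammaRemainder_atTop hx
  have hupper : 0 < errorBound x - digammaRemainder x :=
    pos_of_tendsto_zero_of_add_one_lt (f := fun y => errorBound y - digammaRemainder y)
      (fun _ => errorBound_sub_digammaRemainder_add_one_lt)
      (sub_zero (0 : ℝ) ▸ tendsto_errorBound_atTop.sub tendsto_digammaRemainder_atTop) hx
  rw [digammaRemainder] at hlower hupper
  rw [errorBound] at hupper
  constructor <;> linarith
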